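/- Let I be a strongly stable monomial ideal generated in degrees ≤ k, with I_j denoting its degree-j monomials and G(I) its minimal monomial generators. Then for every i: m_i(G(I)) = m_{≤i}(I_k) − Σ_{j=1}^{k} m_{≤i−1}(I_j), where the counting functions are as defined in the context. -/
import Mathlib


/-- The exponent vector of the monomial `x_j · u / x_i` (exchange move). -/
def exch {n : ℕ} (u : Fin n → ℕ) (i j : Fin n) : Fin n → ℕ :=
  fun k => if k = i then u i - 1 else if k = j then u j + 1 else u k

/-- `maxIdx u` is the largest (1-based) index of a variable dividing the monomial `u`
(`0` for the constant monomial). -/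
def maxIdx {n : ℕ} (u : Fin n → ℕ) : ℕ :=
  (Finset.univ.filter fun i => 0 < u i).sup fun i : Fin n => (i : ℕ) + 1

lemma psa {n : ℕ} (t s : Fin n) : (Pi.single t 1 : Fin n → ℕ) s = if s = t then 1 else 0 := by
  by_cases h : s = t
  · subst h; simp
  · simp [Pi.single_eq_of_ne h, h]

lemma maxIdx_le_iff {n : ℕ} (u : Fin n → ℕ) (i : ℕ) :
    maxIdx u ≤ i ↔ ∀ t : Fin n, 0 < u t → (t : ℕ) + 1 ≤ i := by
  simp [maxIdx, Finset.sup_le_iff]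

lemma pos_of_maxIdx_eq {n : ℕ} (u : Fin n → ℕ) (i : ℕ) (hi : 1 ≤ i)
    (hmax : maxIdx u = i) (ι : Fin n) (hιv : (ι : ℕ) = i - 1) : 0 < u ι := by
  have hpos : 0 < maxIdx u := by omega
  have hne : (Finset.univ.filter fun t : Fin n => 0 < u t).Nonempty := by
    by_contra h
    rw [Finset.not_nonempty_iff_eq_empty] at h
    rw [maxIdx, h] at hpos
    simp at hpos
  obtain ⟨t, ht, hsup⟩ := Finset.exists_mem_eq_sup _ hne (fun t : Fin n => (t : ℕ) + 1)
  rw [maxIdx, hsup] at hmax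
  have htι : t = ι := by
    apply Fin.ext
    omega
  have := (Finset.mem_filter.mp ht).2
  rwa [htι] at this

lemma maxIdx_add_single {n : ℕ} (w : Fin n → ℕ) (ι : Fin n)
    (h : maxIdx w ≤ (ι : ℕ) + 1) : maxIdx (w + Pi.single ι 1) = (ι : ℕ) + 1 := by
  apply le_antisymm
  · rw [maxIdx_le_iff]
    intro t ht
    by_cases htι : t = ι
    · subst htι; exact le_refl _
    · have : 0 < w t := by
        rw [Pi.add_apply, psa, if_neg htι] at ht
        omega
      exact (maxIdx_le_iff w _).mp h t this
  · apply Finset.le_sup (f := fun t : Fin n => (t : ℕ) + 1)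
    rw [Finset.mem_filter]
    refine ⟨Finset.mem_univ _, ?_⟩
    rw [Pi.add_apply, psa, if_pos rfl]
    omega

lemma sub_single_add {n : ℕ} (u : Fin n → ℕ) (ι : Fin n) (h : 0 < u ι) :
    (u - Pi.single ι 1) + Pi.single ι 1 = u := by
  funext t
  rw [Pi.add_apply, Pi.sub_apply, psa]
  by_cases htι : t = ι
  · subst htι
    rw [if_pos rfl]
    omega
  · rw [if_neg htι]
    omega

lemma sum_add_single {n : ℕ} (w : Fin n → ℕ) (ι : Fin n) :
    (∑ t : Fin n, (w + Pi.single ι 1 : Fin n → ℕ) t) = (∑ t : Fin n, w t) + 1 := by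
  have : ∀ t : Fin n, (w + Pi.single ι 1 : Fin n → ℕ) t = w t + (if t = ι then 1 else 0) := by
    intro t
    rw [Pi.add_apply, psa]
  rw [Finset.sum_congr rfl (fun t _ => this t), Finset.sum_add_distrib,
    Finset.sum_ite_eq' Finset.univ ι (fun _ => 1)]
  simp

/-- For a (proper) strongly stable monomial ideal `S` generated in degrees `≤ k`, with
`Ideg j` its set of degree-`j` monomials and `G` its set of minimal monomial
generators: `m_i(G) = m_{≤i}(I_k) − Σ_{j=1}^{k} m_{≤i−1}(I_j)`. -/
theorem mi_generators_formula (n k : ℕ) (S : Set (Fin n → ℕ))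
    (hproper : (0 : Fin n → ℕ) ∉ S)
    (hideal : ∀ a ∈ S, ∀ b : Fin n → ℕ, a + b ∈ S)
    (hss : ∀ a ∈ S, ∀ i j : Fin n, j < i → 0 < a i → exch a i j ∈ S)
    (hgen : ∀ a ∈ S, k < ∑ i, a i → ∃ b ∈ S, ∃ j : Fin n, a = b + Pi.single j 1)
    (Ideg : ℕ → Finset (Fin n → ℕ))
    (hIdeg : ∀ j : ℕ, (↑(Ideg j) : Set (Fin n → ℕ)) = {a ∈ S | ∑ i, a i = j})
    (G : Finset (Fin n → ℕ))
    (hG : (↑G : Set (Fin n → ℕ)) =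
      {a ∈ S | ¬∃ b ∈ S, ∃ j : Fin n, a = b + Pi.single j 1}) :
    ∀ i : ℕ, 1 ≤ i → i ≤ n →
      ((G.filter fun u => maxIdx u = i).card : ℤ)
        = (((Ideg k).filter fun u => maxIdx u ≤ i).card : ℤ)
          - ∑ j ∈ Finset.Icc 1 k,
              (((Ideg j).filter fun u => maxIdx u ≤ i - 1).card : ℤ) := by
  intro i hi1 hin
  have hιlt : i - 1 < n := by omega
  set ι : Fin n := ⟨i - 1, hιlt⟩ with hιdef
  have hιv : (ι : ℕ) = i - 1 := rfl
  have hι1 : (ι : ℕ) + 1 = i := by omega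
  have hIdegMem : ∀ (j : ℕ) (a : Fin n → ℕ), a ∈ Ideg j ↔ a ∈ S ∧ ∑ t, a t = j := by
    intro j a
    have h := Set.ext_iff.mp (hIdeg j) a
    simpa using h
  have hGMem : ∀ a : Fin n → ℕ,
      a ∈ G ↔ a ∈ S ∧ ¬∃ b ∈ S, ∃ t : Fin n, a = b + Pi.single t 1 := by
    intro a
    have h := Set.ext_iff.mp hG a
    simpa using h
  have hIdeg0 : Ideg 0 = ∅ := by
    ext a
    simp only [Finset.notMem_empty, iff_false, hIdegMem]
    rintro ⟨haS, hdeg⟩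
    have ha0 : a = 0 := by
      funext t
      have := Finset.sum_eq_zero_iff.mp hdeg t (Finset.mem_univ t)
      simpa using this
    exact hproper (ha0 ▸ haS)
  -- key counting lemma for each degree j ≥ 1
  have key : ∀ j : ℕ, 1 ≤ j →
      ((G.filter fun u => maxIdx u = i ∧ ∑ t, u t = j).card : ℤ)
        = (((Ideg j).filter fun u => maxIdx u = i).card : ℤ)
          - (((Ideg (j - 1)).filter fun u => maxIdx u ≤ i).card : ℤ) := by
    intro j hj
    have hsplit := Finset.card_filter_add_card_filter_not
      (s := (Ideg j).filter fun u => maxIdx u = i) (p := fun u => u ∈ G)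
    have hA1 : (((Ideg j).filter fun u => maxIdx u = i).filter fun u => u ∈ G)
        = G.filter fun u => maxIdx u = i ∧ ∑ t, u t = j := by
      ext a
      simp only [Finset.mem_filter, hIdegMem, hGMem]
      tauto
    have hbij : ((((Ideg j).filter fun u => maxIdx u = i).filter fun u => ¬ u ∈ G).card)
        = (((Ideg (j - 1)).filter fun u => maxIdx u ≤ i).card) := by
      have hsrc : ∀ u : Fin n → ℕ,
          u ∈ (((Ideg j).filter fun u => maxIdx u = i).filter fun u => ¬ u ∈ G)
          ↔ (u ∈ S ∧ ∑ t, u t = j) ∧ maxIdx u = i ∧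
              (∃ b ∈ S, ∃ t : Fin n, u = b + Pi.single t 1) := by
        intro u
        simp only [Finset.mem_filter, hIdegMem, hGMem]
        constructor
        · rintro ⟨⟨hmem, hmax⟩, hng⟩
          refine ⟨hmem, hmax, ?_⟩
          by_contra hne
          exact hng ⟨hmem.1, hne⟩
        · rintro ⟨hmem, hmax, hex⟩
          exact ⟨⟨hmem, hmax⟩, fun h => h.2 hex⟩
      have htgt : ∀ w : Fin n → ℕ,
          w ∈ ((Ideg (j - 1)).filter fun u => maxIdx u ≤ i)
          ↔ (w ∈ S ∧ ∑ t, w t = j - 1) ∧ maxIdx w ≤ i := by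
        intro w
        simp only [Finset.mem_filter, hIdegMem]
      have hpos : ∀ u : Fin n → ℕ, maxIdx u = i → 0 < u ι :=
        fun u hmax => pos_of_maxIdx_eq u i hi1 hmax ι hιv
      apply Finset.card_bij (fun u _ => u - Pi.single ι 1)
      · -- maps into target
        intro u hu
        rw [hsrc] at hu
        obtain ⟨⟨huS, hudeg⟩, humax, b, hbS, t, hut⟩ := hu
        have huι : 0 < u ι := hpos u humax
        rw [htgt]
        have hrec := sub_single_add u ι huι
        refine ⟨⟨?_, ?_⟩, ?_⟩
        · -- membership in S
          by_cases htι : t = ι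
          · have : u - Pi.single ι 1 = b := by
              funext s
              have hcs := congrFun hut s
              rw [Pi.add_apply, psa] at hcs
              rw [Pi.sub_apply, psa]
              subst htι
              by_cases hst : s = ι
              · rw [if_pos hst] at hcs ⊢
                omega
              · rw [if_neg hst] at hcs ⊢
                omega
            rw [this]; exact hbS
          · have hbι : 0 < b ι := by
              have hcι := congrFun hut ι
              rw [Pi.add_apply, psa, if_neg (fun h : ι = t => htι h.symm)] at hcι
              omega
            have htlt : t < ι := by
              have hut2 : 0 < u t := by
                have hct := congrFun hut t
                rw [Pi.add_apply, psa, if_pos rfl] at hct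
                omega
              have := (maxIdx_le_iff u i).mp (le_of_eq humax) t hut2
              have hne : (t : ℕ) ≠ (ι : ℕ) := fun h => htι (Fin.ext h)
              rw [Fin.lt_def]
              omega
            have hex := hss b hbS ι t htlt hbι
            have heq : u - Pi.single ι 1 = exch b ι t := by
              funext s
              have hcs := congrFun hut s
              rw [Pi.add_apply, psa] at hcs
              rw [Pi.sub_apply, psa]
              show _ = if s = ι then b ι - 1 else if s = t then b t + 1 else b s
              by_cases hst : s = t
              · subst hst
                rw [if_pos rfl] at hcs
                rw [if_neg htι, if_neg htι, if_pos rfl]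
                omega
              · rw [if_neg hst] at hcs
                by_cases hsι : s = ι
                · subst hsι
                  rw [if_pos rfl, if_pos rfl]
                  omega
                · rw [if_neg hsι, if_neg hsι, if_neg hst]
                  omega
            rw [heq]; exact hex
        · -- degree
          have hsum := sum_add_single (u - Pi.single ι 1) ι
          rw [hrec] at hsum
          omega
        · -- maxIdx bound
          rw [maxIdx_le_iff]
          intro s hs
          have hus : 0 < u s := by
            rw [Pi.sub_apply] at hs
            omega
          exact (maxIdx_le_iff u i).mp (le_of_eq humax) s hus
      · -- injective
        intro u1 h1 u2 h2 heq
        rw [hsrc] at h1 h2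
        have p1 := hpos u1 h1.2.1
        have p2 := hpos u2 h2.2.1
        have := congrArg (fun v => v + Pi.single ι 1) heq
        simpa [sub_single_add u1 ι p1, sub_single_add u2 ι p2] using this
      · -- surjective
        intro w hw
        rw [htgt] at hw
        obtain ⟨⟨hwS, hwdeg⟩, hwmax⟩ := hw
        refine ⟨w + Pi.single ι 1, ?_, ?_⟩
        · rw [hsrc]
          have hmax := maxIdx_add_single w ι (by omega)
          refine ⟨⟨hideal w hwS _, ?_⟩, by omega, w, hwS, ι, rfl⟩
          rw [sum_add_single]
          omega
        · funext s
          rw [Pi.sub_apply, Pi.add_apply, psa]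
          by_cases hsι : s = ι
          · rw [if_pos hsι]
            omega
          · rw [if_neg hsι]
            omega
    have hfin : ((G.filter fun u => maxIdx u = i ∧ ∑ t, u t = j).card : ℤ)
        + (((Ideg (j - 1)).filter fun u => maxIdx u ≤ i).card : ℤ)
        = (((Ideg j).filter fun u => maxIdx u = i).card : ℤ) := by
      rw [← hA1, ← hbij]
      exact_mod_cast hsplit
    linarith
  -- partition G by degree
  have hdegG : ∀ u ∈ G.filter fun u => maxIdx u = i, (∑ t, u t) ∈ Finset.Icc 1 k := by
    intro u hu
    obtain ⟨huG, humax⟩ := Finset.mem_filter.mp hu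
    obtain ⟨huS, hng⟩ := (hGMem u).mp huG
    rw [Finset.mem_Icc]
    constructor
    · by_contra h
      have hdeg : ∑ t, u t = 0 := by omega
      have hu0 : u = 0 := by
        funext t
        have := Finset.sum_eq_zero_iff.mp hdeg t (Finset.mem_univ t)
        simpa using this
      exact hproper (hu0 ▸ huS)
    · by_contra h
      exact hng (hgen u huS (by omega))
  have hGsum : ((G.filter fun u => maxIdx u = i).card : ℤ)
      = ∑ j ∈ Finset.Icc 1 k,
          ((G.filter fun u => maxIdx u = i ∧ ∑ t, u t = j).card : ℤ) := by
    have h := Finset.card_eq_sum_card_fiberwise hdegG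
    rw [h]
    push_cast
    apply Finset.sum_congr rfl
    intro j _
    congr 1
    rw [Finset.filter_filter]
  -- m_i = m_{≤i} - m_{≤ i-1}
  have hdecomp : ∀ j : ℕ, (((Ideg j).filter fun u => maxIdx u = i).card : ℤ)
      = (((Ideg j).filter fun u => maxIdx u ≤ i).card : ℤ)
        - (((Ideg j).filter fun u => maxIdx u ≤ i - 1).card : ℤ) := by
    intro j
    have hunion : ((Ideg j).filter fun u => maxIdx u ≤ i)
        = ((Ideg j).filter fun u => maxIdx u = i) ∪
          ((Ideg j).filter fun u => maxIdx u ≤ i - 1) := by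
      ext u
      simp only [Finset.mem_filter, Finset.mem_union]
      by_cases hm : u ∈ Ideg j
      · simp only [hm, true_and]
        clear key hdegG hGsum
        omega
      · simp [hm]
    have hdisj : Disjoint ((Ideg j).filter fun u => maxIdx u = i)
        ((Ideg j).filter fun u => maxIdx u ≤ i - 1) := by
      rw [Finset.disjoint_left]
      intro u h1 h2
      have hx := (Finset.mem_filter.mp h1).2
      have hy := (Finset.mem_filter.mp h2).2
      clear key hdegG hGsum
      omega
    have hcard := Finset.card_union_of_disjoint hdisj
    rw [← hunion] at hcard
    rw [hcard]
    push_cast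
    ring
  -- telescoping
  have htel : ∑ j ∈ Finset.Icc 1 k,
      ((((Ideg j).filter fun u => maxIdx u ≤ i).card : ℤ)
        - (((Ideg (j - 1)).filter fun u => maxIdx u ≤ i).card : ℤ))
      = (((Ideg k).filter fun u => maxIdx u ≤ i).card : ℤ)
        - (((Ideg 0).filter fun u => maxIdx u ≤ i).card : ℤ) := by
    set L : ℕ → ℤ := fun j => (((Ideg j).filter fun u => maxIdx u ≤ i).card : ℤ) with hL
    show ∑ j ∈ Finset.Icc 1 k, (L j - L (j - 1)) = L k - L 0
    rw [← Finset.Ico_add_one_right_eq_Icc, Finset.sum_Ico_eq_sum_range]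
    have hcong : ∀ m ∈ Finset.range (k + 1 - 1), (L (1 + m) - L (1 + m - 1)) = L (m + 1) - L m := by
      intro m _
      have e1 : 1 + m = m + 1 := Nat.add_comm 1 m
      have e2 : 1 + m - 1 = m := Nat.add_sub_cancel_left 1 m
      rw [e2, e1]
    rw [Finset.sum_congr rfl hcong]
    have hk : k + 1 - 1 = k := Nat.add_sub_cancel k 1
    rw [hk]
    exact Finset.sum_range_sub L k
  have hI0 : (((Ideg 0).filter fun u => maxIdx u ≤ i).card : ℤ) = 0 := by
    rw [hIdeg0]; simp
  rw [hGsum]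
  rw [Finset.sum_congr rfl (fun j hj => key j (Finset.mem_Icc.mp hj).1)]
  rw [Finset.sum_congr rfl (fun j _ => by rw [hdecomp j])]
  have hsplitsum : ∑ j ∈ Finset.Icc 1 k,
      ((((Ideg j).filter fun u => maxIdx u ≤ i).card : ℤ)
        - (((Ideg j).filter fun u => maxIdx u ≤ i - 1).card : ℤ)
        - (((Ideg (j - 1)).filter fun u => maxIdx u ≤ i).card : ℤ))
      = (∑ j ∈ Finset.Icc 1 k,
          ((((Ideg j).filter fun u => maxIdx u ≤ i).card : ℤ)
            - (((Ideg (j - 1)).filter fun u => maxIdx u ≤ i).card : ℤ)))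
        - ∑ j ∈ Finset.Icc 1 k, (((Ideg j).filter fun u => maxIdx u ≤ i - 1).card : ℤ) := by
    rw [← Finset.sum_sub_distrib]
    apply Finset.sum_congr rfl
    intro j _
    ring
  rw [hsplitsum, htel, hI0]
  ring
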